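/- arXiv:2106.13224 — 5 statements merged into one kernel-verified Lean document; each statement's English description precedes it below -/
import Mathlib

section
/- Let (V, 𝓗) be an essential and irreducible arrangement and let A ∈ End(V) be a linear endomorphism such that A(H) ⊆ H for every H ∈ 𝓗. Then A is a scalar multiple of the identity: A = λ·Id_V for some λ ∈ ℂ. -/
open scoped Classical

noncomputable section

variable {V : Type*} [AddCommGroup V] [Module ℂ V]

/-- A linear hyperplane in `V`: the kernel of a non-zero linear functional. -/
def IsHyperplane (H : Submodule ℂ V) : Prop :=
  ∃ f : Module.Dual ℂ V, f ≠ 0 ∧ H = LinearMap.ker f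

/-- An arrangement: every member of the finite set `𝓗` is a linear hyperplane. -/
def IsArrangement (𝓗 : Finset (Submodule ℂ V)) : Prop :=
  ∀ H ∈ 𝓗, IsHyperplane H

/-- The span `W(𝓗) ⊆ V⋆` of the defining functionals of the members of `𝓗`,
i.e. the supremum of the dual annihilators of the hyperplanes. -/
def arrSpan (𝓗 : Finset (Submodule ℂ V)) : Submodule ℂ (Module.Dual ℂ V) :=
  ⨆ H ∈ 𝓗, Submodule.dualAnnihilator H

/-- The centre `T(𝓗)`: the common intersection of the members of `𝓗`. -/
def arrCentre (𝓗 : Finset (Submodule ℂ V)) : Submodule ℂ V :=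
  ⨅ H ∈ 𝓗, H

/-- `𝓗` is essential if its centre is zero. -/
def ArrEssential (𝓗 : Finset (Submodule ℂ V)) : Prop :=
  arrCentre 𝓗 = ⊥

/-- `𝓗` is reducible if it admits a u-plus decomposition into two non-empty parts:
a partition `𝓗 = 𝓗₁ ⊎ 𝓗₂` with `W(𝓗) = W(𝓗₁) ⊕ W(𝓗₂)`. -/
def ArrReducible (𝓗 : Finset (Submodule ℂ V)) : Prop :=
  ∃ 𝓗₁ 𝓗₂ : Finset (Submodule ℂ V), 𝓗₁.Nonempty ∧ 𝓗₂.Nonempty ∧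
    Disjoint 𝓗₁ 𝓗₂ ∧ 𝓗₁ ∪ 𝓗₂ = 𝓗 ∧ Disjoint (arrSpan 𝓗₁) (arrSpan 𝓗₂)

/-- `𝓗` is irreducible if it is not reducible. -/
def ArrIrreducible (𝓗 : Finset (Submodule ℂ V)) : Prop :=
  ¬ ArrReducible 𝓗

/-! The transpose `A.dualMap` preserves the dual annihilator `H⁰ = ℂ ∙ f_H` of every `H ∈ 𝓗`,
so each defining functional `f_H` is an eigenvector of it. Functionals with distinct eigenvalues
span independent subspaces of `V⋆`, so irreducibility forces a single eigenvalue `c`, and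
essentiality says the `f_H` span `V⋆`. Hence `A.dualMap = c • 1`, and functionals separate
points, so `A = c • 1`. -/

namespace Module.Dual

variable {K M : Type*} [Field K] [AddCommGroup M] [Module K M]

theorem dualAnnihilator_ker_eq_span_singleton (f : Dual K M) :
    (LinearMap.ker f).dualAnnihilator = K ∙ f := by
  refine le_antisymm (fun g hg ↦ ?_) ?_
  · have hfg : ⨅ _ : Unit, LinearMap.ker f ≤ LinearMap.ker g := by
      rw [iInf_const]
      exact fun x hx ↦ (Submodule.mem_dualAnnihilator g).1 hg x hx
    simpa using mem_span_of_iInf_ker_le_ker hfg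
  · rw [Submodule.span_singleton_le_iff_mem, Submodule.mem_dualAnnihilator]
    exact fun x hx ↦ hx

end Module.Dual

theorem Submodule.map_dualMap_dualAnnihilator_le {R M : Type*} [CommSemiring R] [AddCommMonoid M]
    [Module R M] {W : Submodule R M} {A : Module.End R M} (hA : W.map A ≤ W) :
    W.dualAnnihilator.map A.dualMap ≤ W.dualAnnihilator :=
  (W.dualAnnihilator_map_dualMap_le A).trans
    (Submodule.dualAnnihilator_anti (Submodule.map_le_iff_le_comap.1 hA))

namespace Module.End

variable {K M : Type*} [Field K] [AddCommGroup M] [Module K M]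

theorem exists_span_singleton_le_eigenspace {B : End K M} {x : M} (hx : B x ∈ K ∙ x) :
    ∃ c : K, K ∙ x ≤ B.eigenspace c := by
  obtain ⟨c, hc⟩ := Submodule.mem_span_singleton.1 hx
  exact ⟨c, (Submodule.span_singleton_le_iff_mem _ _).2 (mem_eigenspace_iff.2 hc.symm)⟩

theorem eq_smul_one_of_eigenspace_dualMap_eq_top {A : End K M} {c : K}
    (h : eigenspace A.dualMap c = ⊤) : A = c • 1 := by
  ext x
  rw [← sub_eq_zero, ← Module.forall_dual_apply_eq_zero_iff K]
  intro φ
  have hφ : φ (A x) = c * φ x :=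
    LinearMap.congr_fun (mem_eigenspace_iff.1 (h ▸ Submodule.mem_top)) x
  simp [hφ]

end Module.End

theorem IsHyperplane.exists_dualAnnihilator_le_eigenspace {H : Submodule ℂ V}
    (hH : IsHyperplane H) {A : Module.End ℂ V} (hA : H.map A ≤ H) :
    ∃ c : ℂ, H.dualAnnihilator ≤ Module.End.eigenspace A.dualMap c := by
  obtain ⟨f, -, rfl⟩ := hH
  have hinv := Submodule.map_dualMap_dualAnnihilator_le hA
  rw [Module.Dual.dualAnnihilator_ker_eq_span_singleton] at hinv ⊢
  exact Module.End.exists_span_singleton_le_eigenspace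
    (hinv (Submodule.mem_map_of_mem (Submodule.mem_span_singleton_self f)))

theorem arrSpan_le_iff {𝓗 : Finset (Submodule ℂ V)} {S : Submodule ℂ (Module.Dual ℂ V)} :
    arrSpan 𝓗 ≤ S ↔ ∀ H ∈ 𝓗, H.dualAnnihilator ≤ S :=
  iSup₂_le_iff

theorem arrSpan_eq_dualAnnihilator_arrCentre (𝓗 : Finset (Submodule ℂ V)) :
    arrSpan 𝓗 = (arrCentre 𝓗).dualAnnihilator := by
  rw [arrCentre, arrSpan, iInf_subtype', iSup_subtype', Subspace.dualAnnihilator_iInf_eq]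

theorem ArrEssential.arrSpan_eq_top {𝓗 : Finset (Submodule ℂ V)} (hess : ArrEssential 𝓗) :
    arrSpan 𝓗 = ⊤ := by
  rw [arrSpan_eq_dualAnnihilator_arrCentre, hess, Submodule.dualAnnihilator_bot]

theorem ArrIrreducible.eq_of_dualAnnihilator_le_eigenspace {𝓗 : Finset (Submodule ℂ V)}
    (hirr : ArrIrreducible 𝓗) {B : Module.End ℂ (Module.Dual ℂ V)} {μ : Submodule ℂ V → ℂ}
    (hμ : ∀ H ∈ 𝓗, H.dualAnnihilator ≤ B.eigenspace (μ H)) {H₀ H₁ : Submodule ℂ V}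
    (hH₀ : H₀ ∈ 𝓗) (hH₁ : H₁ ∈ 𝓗) : μ H₁ = μ H₀ := by
  by_contra hne
  refine hirr ⟨𝓗.filter (μ · = μ H₀), 𝓗.filter (μ · ≠ μ H₀), ⟨H₀, by simp [hH₀]⟩,
    ⟨H₁, by simp [hH₁, hne]⟩, Finset.disjoint_filter_filter_not _ _ _,
    Finset.filter_union_filter_not_eq _ _, ?_⟩
  refine (B.eigenspaces_iSupIndep (μ H₀)).mono ?_ ?_
  · refine arrSpan_le_iff.2 fun H hH ↦ ?_
    rw [Finset.mem_filter] at hH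
    exact hH.2 ▸ hμ H hH.1
  · refine arrSpan_le_iff.2 fun H hH ↦ ?_
    rw [Finset.mem_filter] at hH
    exact (hμ H hH.1).trans (le_iSup₂ (f := fun ν _ ↦ B.eigenspace ν) (μ H) hH.2)

theorem ArrIrreducible.exists_arrSpan_le_eigenspace {𝓗 : Finset (Submodule ℂ V)}
    (hirr : ArrIrreducible 𝓗) {B : Module.End ℂ (Module.Dual ℂ V)}
    (h : ∀ H ∈ 𝓗, ∃ c, H.dualAnnihilator ≤ B.eigenspace c) :
    ∃ c, arrSpan 𝓗 ≤ B.eigenspace c := by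
  choose! μ hμ using h
  rcases 𝓗.eq_empty_or_nonempty with rfl | ⟨H₀, hH₀⟩
  · exact ⟨0, arrSpan_le_iff.2 fun H hH ↦ absurd hH (Finset.notMem_empty H)⟩
  refine ⟨μ H₀, arrSpan_le_iff.2 fun H hH ↦ ?_⟩
  rw [← hirr.eq_of_dualAnnihilator_le_eigenspace hμ hH₀ hH]
  exact hμ H hH

theorem arrangement_preserving_endomorphism_is_scalar_general
    (𝓗 : Finset (Submodule ℂ V)) (harr : IsArrangement 𝓗)
    (hess : ArrEssential 𝓗) (hirr : ArrIrreducible 𝓗)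
    (A : Module.End ℂ V) (hA : ∀ H ∈ 𝓗, Submodule.map A H ≤ H) :
    ∃ c : ℂ, A = c • (1 : Module.End ℂ V) := by
  obtain ⟨c, hc⟩ := hirr.exists_arrSpan_le_eigenspace (B := A.dualMap)
    fun H hH ↦ (harr H hH).exists_dualAnnihilator_le_eigenspace (hA H hH)
  rw [hess.arrSpan_eq_top, top_le_iff] at hc
  exact ⟨c, Module.End.eq_smul_one_of_eigenspace_dualMap_eq_top hc⟩

/-- If `(V, 𝓗)` is an essential and irreducible arrangement and
`A ∈ End(V)` satisfies `A(H) ⊆ H` for every `H ∈ 𝓗`, then `A` is a scalar multiple of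
the identity. -/
theorem arrangement_preserving_endomorphism_is_scalar
    [FiniteDimensional ℂ V]
    (𝓗 : Finset (Submodule ℂ V)) (harr : IsArrangement 𝓗)
    (hess : ArrEssential 𝓗) (hirr : ArrIrreducible 𝓗)
    (A : Module.End ℂ V) (hA : ∀ H ∈ 𝓗, Submodule.map A H ≤ H) :
    ∃ c : ℂ, A = c • (1 : Module.End ℂ V) :=
  arrangement_preserving_endomorphism_is_scalar_general 𝓗 harr hess hirr A hA
end
end

section
/- Every non-empty arrangement (V, 𝓗) admits an irreducible decomposition 𝓗 = 𝓗₁ ⊎ … ⊎ 𝓗_k, i.e. a u-plus decomposition in which every subset 𝓗_i is non-empty and irreducible; moreover this decomposition is unique up to relabelling of the subsets 𝓗_i. -/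
open scoped Classical

noncomputable section

variable {V : Type*} [AddCommGroup V] [Module ℂ V]

/-- An irreducible decomposition of `𝓗`: a u-plus decomposition (a partition of `𝓗`
whose spans of defining functionals are independent) all of whose parts are
non-empty and irreducible. -/
def IsIrredDecomp (𝓗 : Finset (Submodule ℂ V)) (P : Finset (Finset (Submodule ℂ V))) : Prop :=
  (∀ p ∈ P, p.Nonempty) ∧
  (∀ p ∈ P, ∀ q ∈ P, p ≠ q → Disjoint p q) ∧
  P.biUnion id = 𝓗 ∧
  (∀ p ∈ P, Disjoint (arrSpan p) (⨆ q ∈ P.erase p, arrSpan q)) ∧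
  ∀ p ∈ P, ArrIrreducible p

/-! Everything takes place in the modular lattice of subspaces of `V⋆`, where a u-plus
decomposition is a `Finset.SupIndep` family of spans. If an irreducible subfamily `p` of `𝓗`
met two parts of a u-plus decomposition, intersecting `p` with one of them would split `p`
u-plus; so it lies in a single part. Applied to the parts of two irreducible decompositions
this makes every part of one equal to a part of the other. Existence is induction on the size of `𝓗`,
splitting reducible families in two. -/

open Finset

lemma arrSpan_eq_sup (s : Finset (Submodule ℂ V)) :
    arrSpan s = s.sup Submodule.dualAnnihilator :=
  (Finset.sup_eq_iSup _ _).symm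

lemma arrSpan_mono {s t : Finset (Submodule ℂ V)} (h : s ⊆ t) : arrSpan s ≤ arrSpan t := by
  simpa only [arrSpan_eq_sup] using sup_mono h

lemma arrSpan_biUnion (P : Finset (Finset (Submodule ℂ V))) :
    arrSpan (P.biUnion id) = P.sup arrSpan := by
  rw [arrSpan_eq_sup, sup_biUnion]
  exact sup_congr rfl fun s _ => (arrSpan_eq_sup s).symm

lemma supIndep_arrSpan_iff (P : Finset (Finset (Submodule ℂ V))) :
    P.SupIndep arrSpan ↔ ∀ p ∈ P, Disjoint (arrSpan p) (⨆ q ∈ P.erase p, arrSpan q) := by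
  simp only [supIndep_iff_disjoint_erase, Finset.sup_eq_iSup]

lemma isIrredDecomp_iff (𝓗 : Finset (Submodule ℂ V)) (P : Finset (Finset (Submodule ℂ V))) :
    IsIrredDecomp 𝓗 P ↔ (∀ p ∈ P, p.Nonempty) ∧
      (P : Set (Finset (Submodule ℂ V))).PairwiseDisjoint id ∧ P.biUnion id = 𝓗 ∧ P.SupIndep arrSpan ∧ ∀ p ∈ P, ArrIrreducible p := by
  rw [IsIrredDecomp, supIndep_arrSpan_iff]
  rfl

lemma ArrReducible.of_disjoint_sdiff {s p : Finset (Submodule ℂ V)} (hsp : s ⊆ p)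
    (hs : s.Nonempty) (hps : (p \ s).Nonempty) (h : Disjoint (arrSpan s) (arrSpan (p \ s))) :
    ArrReducible p :=
  ⟨s, p \ s, hs, hps, disjoint_sdiff, union_sdiff_of_subset hsp, h⟩

lemma ArrIrreducible.exists_subset_of_supIndep {p : Finset (Submodule ℂ V)}
    {P : Finset (Finset (Submodule ℂ V))} (hp : ArrIrreducible p) (hpne : p.Nonempty)
    (hpP : p ⊆ P.biUnion id) (hP : P.SupIndep arrSpan) : ∃ q ∈ P, p ⊆ q := by
  obtain ⟨H₀, hH₀⟩ := hpne
  obtain ⟨q₀, hq₀, hH₀q₀⟩ := mem_biUnion.1 (hpP hH₀)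
  refine ⟨q₀, hq₀, ?_⟩
  by_contra hpq₀
  have hrest : p \ q₀ ⊆ (P.erase q₀).biUnion id := fun H hH => by
    obtain ⟨q, hq, hHq⟩ := mem_biUnion.1 (hpP (mem_sdiff.1 hH).1)
    exact mem_biUnion.2 ⟨q, mem_erase.2 ⟨by rintro rfl; exact (mem_sdiff.1 hH).2 hHq, hq⟩, hHq⟩
  refine hp (.of_disjoint_sdiff inter_subset_left ⟨H₀, mem_inter.2 ⟨hH₀, hH₀q₀⟩⟩ ?_ ?_)
  · rw [sdiff_inter_self_left]
    exact sdiff_nonempty.2 hpq₀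
  · rw [sdiff_inter_self_left]
    refine (supIndep_iff_disjoint_erase.1 hP q₀ hq₀).mono (arrSpan_mono inter_subset_right) ?_
    exact (arrSpan_mono hrest).trans_eq (arrSpan_biUnion _)

lemma IsIrredDecomp.subset {𝓗 : Finset (Submodule ℂ V)} {P Q : Finset (Finset (Submodule ℂ V))}
    (hP : IsIrredDecomp 𝓗 P) (hQ : IsIrredDecomp 𝓗 Q) : P ⊆ Q := by
  rw [isIrredDecomp_iff] at hP hQ
  obtain ⟨hPne, hPdisj, hPun, hPind, hPirr⟩ := hP
  obtain ⟨hQne, -, hQun, hQind, hQirr⟩ := hQ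
  intro p hp
  have hp𝓗 : p ⊆ Q.biUnion id := hQun ▸ hPun ▸ subset_biUnion_of_mem id hp
  obtain ⟨q, hq, hpq⟩ := (hPirr p hp).exists_subset_of_supIndep (hPne p hp) hp𝓗 hQind
  have hq𝓗 : q ⊆ P.biUnion id := hPun ▸ hQun ▸ subset_biUnion_of_mem id hq
  obtain ⟨p', hp', hqp'⟩ := (hQirr q hq).exists_subset_of_supIndep (hQne q hq) hq𝓗 hPind
  have hpp' : p = p' := by
    by_contra hne
    obtain ⟨H, hH⟩ := hPne p hp
    exact disjoint_left.1 (hPdisj hp hp' hne) hH (hqp' (hpq hH))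
  subst hpp'
  exact (hpq.antisymm hqp') ▸ hq

lemma IsIrredDecomp.union {𝓗₁ 𝓗₂ : Finset (Submodule ℂ V)}
    {P₁ P₂ : Finset (Finset (Submodule ℂ V))} (h₁ : IsIrredDecomp 𝓗₁ P₁)
    (h₂ : IsIrredDecomp 𝓗₂ P₂) (hdisj : Disjoint 𝓗₁ 𝓗₂)
    (hspan : Disjoint (arrSpan 𝓗₁) (arrSpan 𝓗₂)) : IsIrredDecomp (𝓗₁ ∪ 𝓗₂) (P₁ ∪ P₂) := by
  rw [isIrredDecomp_iff] at h₁ h₂ ⊢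
  obtain ⟨h₁ne, h₁disj, rfl, h₁ind, h₁irr⟩ := h₁
  obtain ⟨h₂ne, h₂disj, rfl, h₂ind, h₂irr⟩ := h₂
  refine ⟨fun p hp => ?_, ?_, union_biUnion, ?_, fun p hp => ?_⟩
  · rcases mem_union.1 hp with hp | hp
    exacts [h₁ne p hp, h₂ne p hp]
  · rw [coe_union, Set.pairwiseDisjoint_union]
    exact ⟨h₁disj, h₂disj, fun p hp q hq _ =>
      hdisj.mono (subset_biUnion_of_mem id hp) (subset_biUnion_of_mem id hq)⟩
  · rw [arrSpan_biUnion, arrSpan_biUnion] at hspan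
    exact h₁ind.union h₂ind hspan
  · rcases mem_union.1 hp with hp | hp
    exacts [h₁irr p hp, h₂irr p hp]

lemma exists_isIrredDecomp (𝓗 : Finset (Submodule ℂ V)) : ∃ P, IsIrredDecomp 𝓗 P := by
  induction 𝓗 using strongInduction with
  | H 𝓗 ih =>
  by_cases hred : ArrReducible 𝓗
  · obtain ⟨𝓗₁, 𝓗₂, h₁ne, h₂ne, hdisj, rfl, hspan⟩ := hred
    obtain ⟨P₁, hP₁⟩ := ih 𝓗₁ <|
      left_lt_sup.2 fun h => h₂ne.ne_empty (disjoint_self.1 (hdisj.mono_left h))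
    obtain ⟨P₂, hP₂⟩ := ih 𝓗₂ <|
      right_lt_sup.2 fun h => h₁ne.ne_empty (disjoint_self.1 (hdisj.mono_right h))
    exact ⟨P₁ ∪ P₂, hP₁.union hP₂ hdisj hspan⟩
  rcases 𝓗.eq_empty_or_nonempty with rfl | hne
  · exact ⟨∅, by simp [isIrredDecomp_iff, supIndep_empty]⟩
  · refine ⟨{𝓗}, ?_⟩
    simp [isIrredDecomp_iff, supIndep_singleton, hne, ArrIrreducible, hred]

theorem existsUnique_irreducible_decomposition_general
    (𝓗 : Finset (Submodule ℂ V)) :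
    ∃! P : Finset (Finset (Submodule ℂ V)), IsIrredDecomp 𝓗 P := by
  obtain ⟨P, hP⟩ := exists_isIrredDecomp 𝓗
  exact ⟨P, hP, fun Q hQ => (hQ.subset hP).antisymm (hP.subset hQ)⟩

/-- Every non-empty arrangement admits an irreducible decomposition,
unique up to relabelling of the parts (i.e. unique as a set of parts). -/
theorem existsUnique_irreducible_decomposition
    [FiniteDimensional ℂ V]
    (𝓗 : Finset (Submodule ℂ V)) (harr : IsArrangement 𝓗) (hne : 𝓗.Nonempty) :
    ∃! P : Finset (Finset (Submodule ℂ V)), IsIrredDecomp 𝓗 P :=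
  existsUnique_irreducible_decomposition_general 𝓗
end
end

section
/- Let (V, 𝓗) be an essential and irreducible arrangement with dim V ≥ 2. Then there exists a hyperplane H₀ ∈ 𝓗 such that the induced arrangement 𝓗'' = {H ∩ H₀ : H ∈ 𝓗 ∖ {H₀}}, viewed as an arrangement of hyperplanes in the vector space H₀, is also essential and irreducible. -/
open scoped Classical

noncomputable section

variable {V : Type*} [AddCommGroup V] [Module ℂ V]

/-- The induced (restricted) arrangement `𝓗'' = {H ∩ H₀ : H ∈ 𝓗 \ {H₀}}`, viewed as
an arrangement of hyperplanes in the vector space `H₀`. -/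
def inducedArr (𝓗 : Finset (Submodule ℂ V)) (H₀ : Submodule ℂ V) :
    Finset (Submodule ℂ ↥H₀) :=
  (𝓗.erase H₀).image fun H => Submodule.comap H₀.subtype H

/-!
Pass to the dual space: the annihilators `H⁰` of the hyperplanes are distinct lines (atoms) of
the modular lattice of subspaces of `V⋆`, irreducibility says that they cannot be split into two
parts with independent spans, and restricting to `H₀` amounts to working in `V⋆ ⧸ H₀⁰`, i.e.
contracting at the line `H₀⁰`.

If the contraction at a line `e` splits, connectivity forces the split to be a 2-sum: the spans
of the two sides `A`, `B` meet exactly in `e`. Then `A ∪ {e}` is again connected (modular law)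
and smaller, so by induction some `f ≠ e` in it has a connected contraction, and the 2-sum
structure lifts this to the whole family. To guarantee `f ≠ e` the induction proves more: the
element with connected contraction can be chosen different from any prescribed `g`, and one
recurses into the side not containing `g`.
-/

section Lattice

variable {ι α : Type*} [Lattice α] [OrderBot α]

/-- For subspaces, `IsConnectedModulo E T φ` says that the images of the `φ i` in the quotient by
`E` cannot be split into two parts with independent spans; for `E = ⊥` this is irreducibility. -/
def IsConnectedModulo (E : α) (T : Finset ι) (φ : ι → α) : Prop :=
  ∀ A B : Finset ι, A.Nonempty → B.Nonempty → Disjoint A B → A ∪ B = T →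
    ¬ (A.sup φ ⊔ E) ⊓ (B.sup φ ⊔ E) ≤ E

/-- `T` is the 2-sum of `insert e A` and `insert e B` along `e`. -/
structure IsTwoSum (T : Finset ι) (φ : ι → α) (e : ι) (A B : Finset ι) : Prop where
  left_nonempty : A.Nonempty
  right_nonempty : B.Nonempty
  disjoint : Disjoint A B
  union_eq : A ∪ B = T.erase e
  inf_eq : A.sup φ ⊓ B.sup φ = φ e

variable {E : α} {T A B : Finset ι} {φ : ι → α} {e f : ι}

lemma isConnectedModulo_bot_iff :
    IsConnectedModulo ⊥ T φ ↔ ∀ A B : Finset ι, A.Nonempty → B.Nonempty → Disjoint A B →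
      A ∪ B = T → ¬ Disjoint (A.sup φ) (B.sup φ) := by
  simp only [IsConnectedModulo, sup_bot_eq, le_bot_iff, disjoint_iff]

lemma IsConnectedModulo.image {κ : Type*} {ψ : ι → κ} {φ : κ → α}
    (h : IsConnectedModulo E T (φ ∘ ψ)) : IsConnectedModulo E (T.image ψ) φ := by
  intro P Q hP hQ hPQ hun hle
  have hQ_of : ∀ i ∈ T, ψ i ∉ P → ψ i ∈ Q := fun i hi hiP =>
    (Finset.mem_union.mp (hun ▸ Finset.mem_image_of_mem ψ hi)).resolve_left hiP
  refine h (T.filter (ψ · ∈ P)) (T.filter (ψ · ∉ P)) ?_ ?_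
    (Finset.disjoint_filter_filter_not _ _ _) (Finset.filter_union_filter_not_eq _ _) ?_
  · obtain ⟨_, hp⟩ := hP
    obtain ⟨i, hi, rfl⟩ := Finset.mem_image.mp (hun ▸ Finset.mem_union_left Q hp)
    exact ⟨i, Finset.mem_filter.mpr ⟨hi, hp⟩⟩
  · obtain ⟨_, hq⟩ := hQ
    obtain ⟨i, hi, rfl⟩ := Finset.mem_image.mp (hun ▸ Finset.mem_union_right P hq)
    exact ⟨i, Finset.mem_filter.mpr ⟨hi, Finset.disjoint_right.mp hPQ hq⟩⟩
  · refine le_trans (inf_le_inf (sup_le_sup_right ?_ E) (sup_le_sup_right ?_ E)) hle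
    · exact Finset.sup_le fun i hi => Finset.le_sup (f := φ) (Finset.mem_filter.mp hi).2
    · exact Finset.sup_le fun i hi =>
        Finset.le_sup (f := φ) (hQ_of i (Finset.mem_filter.mp hi).1 (Finset.mem_filter.mp hi).2)

namespace IsTwoSum

lemma symm (h : IsTwoSum T φ e A B) : IsTwoSum T φ e B A where
  left_nonempty := h.right_nonempty
  right_nonempty := h.left_nonempty
  disjoint := h.disjoint.symm
  union_eq := Finset.union_comm B A ▸ h.union_eq
  inf_eq := inf_comm (B.sup φ) (A.sup φ) ▸ h.inf_eq

lemma le_sup_left (h : IsTwoSum T φ e A B) : φ e ≤ A.sup φ :=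
  h.inf_eq ▸ inf_le_left

lemma le_sup_right (h : IsTwoSum T φ e A B) : φ e ≤ B.sup φ :=
  h.symm.le_sup_left

lemma subset_erase_left (h : IsTwoSum T φ e A B) : A ⊆ T.erase e :=
  h.union_eq ▸ Finset.subset_union_left

lemma subset_erase_right (h : IsTwoSum T φ e A B) : B ⊆ T.erase e :=
  h.symm.subset_erase_left

lemma subset_left (h : IsTwoSum T φ e A B) : A ⊆ T :=
  h.subset_erase_left.trans (Finset.erase_subset e T)

lemma notMem_left (h : IsTwoSum T φ e A B) : e ∉ A :=
  fun heA => Finset.notMem_erase e T (h.subset_erase_left heA)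

lemma insert_union_eq (h : IsTwoSum T φ e A B) (he : e ∈ T) : insert e A ∪ B = T := by
  rw [Finset.insert_union, h.union_eq, Finset.insert_erase he]

lemma disjoint_insert_left (h : IsTwoSum T φ e A B) : Disjoint (insert e A) B :=
  Finset.disjoint_insert_left.mpr
    ⟨fun heB => Finset.notMem_erase e T (h.subset_erase_right heB), h.disjoint⟩

end IsTwoSum

lemma le_sup_of_isConnectedModulo_bot (hT : IsConnectedModulo ⊥ T φ) (he : e ∈ T)
    (hatom : IsAtom (φ e)) (hB : B.Nonempty) (hAB : Disjoint A B) (hun : A ∪ B = T.erase e)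
    (hle : (A.sup φ ⊔ φ e) ⊓ (B.sup φ ⊔ φ e) ≤ φ e) : φ e ≤ B.sup φ := by
  have heB : e ∉ B := fun heB => Finset.notMem_erase e T (hun ▸ Finset.mem_union_right A heB)
  have hmeet := hT (insert e A) B (Finset.insert_nonempty e A) hB
    (Finset.disjoint_insert_left.mpr ⟨heB, hAB⟩)
    (by rw [Finset.insert_union, hun, Finset.insert_erase he])
  rw [sup_bot_eq, sup_bot_eq, Finset.sup_insert, sup_comm] at hmeet
  have hsub : (A.sup φ ⊔ φ e) ⊓ B.sup φ ≤ φ e := le_trans (inf_le_inf_left _ le_sup_left) hle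
  rw [← (hatom.le_iff.mp hsub).resolve_left (by simpa using hmeet)]
  exact inf_le_right

lemma exists_isTwoSum_of_not_isConnectedModulo (hT : IsConnectedModulo ⊥ T φ) (he : e ∈ T)
    (hatom : IsAtom (φ e)) (h : ¬ IsConnectedModulo (φ e) (T.erase e) φ) :
    ∃ A B, IsTwoSum T φ e A B := by
  simp only [IsConnectedModulo, not_forall, not_not] at h
  obtain ⟨A, B, hA, hB, hAB, hun, hle⟩ := h
  have heA : φ e ≤ A.sup φ := le_sup_of_isConnectedModulo_bot hT he hatom hA hAB.symm
    (Finset.union_comm B A ▸ hun) (inf_comm (A.sup φ ⊔ φ e) _ ▸ hle)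
  have heB : φ e ≤ B.sup φ := le_sup_of_isConnectedModulo_bot hT he hatom hB hAB hun hle
  exact ⟨A, B, hA, hB, hAB, hun,
    le_antisymm ((inf_le_inf le_sup_left le_sup_left).trans hle) (le_inf heA heB)⟩

lemma IsTwoSum.isConnectedModulo_insert [IsModularLattice α] (hT : IsConnectedModulo ⊥ T φ)
    (he : e ∈ T) (h : IsTwoSum T φ e A B) : IsConnectedModulo ⊥ (insert e A) φ := by
  rw [isConnectedModulo_bot_iff] at hT ⊢
  suffices key : ∀ P Q : Finset ι, Q.Nonempty → Disjoint P Q → P ∪ Q = insert e A → e ∈ P →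
      ¬ Disjoint (P.sup φ) (Q.sup φ) by
    intro P Q hP hQ hPQ hun
    rcases Finset.mem_union.mp (hun ▸ Finset.mem_insert_self e A) with heP | heQ
    · exact key P Q hQ hPQ hun heP
    · exact fun hdisj => key Q P hP hPQ.symm (Finset.union_comm Q P ▸ hun) heQ hdisj.symm
  intro P Q hQ hPQ hun heP hdisj
  have hQA : Q ⊆ A := fun i hi =>
    (Finset.mem_insert.mp (hun ▸ Finset.mem_union_right P hi)).resolve_left
      fun hie => Finset.disjoint_left.mp hPQ (hie ▸ heP) hi
  have hPA : P.sup φ ≤ A.sup φ := Finset.sup_le fun i hi => by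
    rcases Finset.mem_insert.mp (hun ▸ Finset.mem_union_left Q hi) with rfl | hiA
    · exact h.le_sup_left
    · exact Finset.le_sup hiA
  -- modular law: inside `A.sup φ`, adding `B` to `P` only adds `φ e`, which `P` already spans
  have hmod : (P.sup φ ⊔ B.sup φ) ⊓ A.sup φ = P.sup φ := by
    rw [sup_inf_assoc_of_le _ hPA, inf_comm, h.inf_eq, sup_eq_left.mpr (Finset.le_sup heP)]
  refine hT Q (P ∪ B) hQ ⟨e, Finset.mem_union_left B heP⟩
    (Finset.disjoint_union_right.mpr ⟨hPQ.symm, h.disjoint.mono_left hQA⟩) ?_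
    (disjoint_iff.mpr ?_)
  · rw [← Finset.union_assoc, Finset.union_comm Q P, hun, h.insert_union_eq he]
  · calc Q.sup φ ⊓ (P ∪ B).sup φ = (Q.sup φ ⊓ A.sup φ) ⊓ (P.sup φ ⊔ B.sup φ) := by
          rw [inf_eq_left.mpr (Finset.sup_mono (f := φ) hQA), Finset.sup_union]
      _ = Q.sup φ ⊓ P.sup φ := by rw [inf_assoc, inf_comm (A.sup φ), hmod]
      _ = ⊥ := disjoint_iff.mp hdisj.symm

lemma IsTwoSum.isConnectedModulo_erase (hT : IsConnectedModulo ⊥ T φ)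
    (hatoms : ∀ i ∈ T, IsAtom (φ i)) (hinj : Set.InjOn φ T) (h : IsTwoSum T φ e A B)
    (he : e ∈ T) (hf : f ∈ A) (hM : IsConnectedModulo (φ f) ((insert e A).erase f) φ) :
    IsConnectedModulo (φ f) (T.erase f) φ := by
  have hMT : insert e A ⊆ T := Finset.insert_subset he h.subset_left
  have hfT : f ∈ T := h.subset_left hf
  by_contra hnc
  obtain ⟨P, Q, hPQ⟩ := exists_isTwoSum_of_not_isConnectedModulo hT hfT (hatoms f hfT) hnc
  -- a side missing `insert e A` lies in `B`, so `φ f ≤ A.sup φ ⊓ B.sup φ = φ e`, forcing `f = e`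
  have meets : ∀ {X Y : Finset ι}, IsTwoSum T φ f X Y → (X ∩ insert e A).Nonempty := by
    intro X Y hXY
    by_contra hXM
    have hXM : Disjoint X (insert e A) := Finset.disjoint_iff_inter_eq_empty.mpr
      (Finset.not_nonempty_iff_eq_empty.mp hXM)
    have hXB : X ⊆ B := fun i hi => by
      have hiM := Finset.disjoint_left.mp hXM hi
      rw [Finset.mem_insert, not_or] at hiM
      have hiT : i ∈ T.erase e := Finset.mem_erase.mpr ⟨hiM.1, hXY.subset_left hi⟩
      exact (Finset.mem_union.mp (h.union_eq ▸ hiT)).resolve_left hiM.2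
    have hfe : φ f ≤ φ e :=
      h.inf_eq ▸ le_inf (Finset.le_sup hf) (hXY.le_sup_left.trans (Finset.sup_mono hXB))
    have hfe' : f = e :=
      hinj hfT he (((hatoms e he).le_iff.mp hfe).resolve_left (hatoms f hfT).1)
    exact h.notMem_left (hfe' ▸ hf)
  refine hM (P ∩ insert e A) (Q ∩ insert e A) (meets hPQ) (meets hPQ.symm)
    (hPQ.disjoint.mono Finset.inter_subset_left Finset.inter_subset_left) ?_ ?_
  · rw [← Finset.union_inter_distrib_right, hPQ.union_eq, Finset.erase_inter,
      Finset.inter_eq_right.mpr hMT]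
  · calc ((P ∩ insert e A).sup φ ⊔ φ f) ⊓ ((Q ∩ insert e A).sup φ ⊔ φ f)
          ≤ (P.sup φ ⊔ φ f) ⊓ (Q.sup φ ⊔ φ f) :=
        inf_le_inf (sup_le_sup_right (Finset.sup_mono Finset.inter_subset_left) _)
          (sup_le_sup_right (Finset.sup_mono Finset.inter_subset_left) _)
      _ = φ f := by
        rw [sup_eq_left.mpr hPQ.le_sup_left, sup_eq_left.mpr hPQ.le_sup_right, hPQ.inf_eq]

theorem exists_ne_isConnectedModulo_erase [IsModularLattice α] (hT : IsConnectedModulo ⊥ T φ)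
    (hatoms : ∀ i ∈ T, IsAtom (φ i)) (hinj : Set.InjOn φ T) (hcard : 1 < T.card) (g : ι) :
    ∃ e ∈ T, e ≠ g ∧ IsConnectedModulo (φ e) (T.erase e) φ := by
  induction hn : T.card using Nat.strong_induction_on generalizing T g with
  | _ n ih =>
  obtain ⟨e, he, heg⟩ := T.exists_mem_ne hcard g
  by_cases hc : IsConnectedModulo (φ e) (T.erase e) φ
  · exact ⟨e, he, heg, hc⟩
  obtain ⟨A, B, h⟩ := exists_isTwoSum_of_not_isConnectedModulo hT he (hatoms e he) hc
  wlog hgA : g ∉ A generalizing A B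
  · exact this B A h.symm (Finset.disjoint_left.mp h.disjoint (not_not.mp hgA))
  have hMT : insert e A ⊆ T := Finset.insert_subset he h.subset_left
  have hcardT : (insert e A).card + B.card = n := by
    rw [← hn, ← Finset.card_union_of_disjoint h.disjoint_insert_left, h.insert_union_eq he]
  have hcardM : (insert e A).card = A.card + 1 := Finset.card_insert_of_notMem h.notMem_left
  have := h.left_nonempty.card_pos
  have := h.right_nonempty.card_pos
  obtain ⟨f, hfM, hfe, hf⟩ := ih _ (by omega) (h.isConnectedModulo_insert hT he)
    (fun i hi => hatoms i (hMT hi)) (hinj.mono (Finset.coe_subset.mpr hMT)) (by omega) e rfl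
  have hfA : f ∈ A := (Finset.mem_insert.mp hfM).resolve_left hfe
  exact ⟨f, h.subset_left hfA, fun hfg => hgA (hfg ▸ hfA),
    h.isConnectedModulo_erase hT hatoms hinj he hfA hf⟩

theorem exists_isConnectedModulo_erase [IsModularLattice α] (hT : IsConnectedModulo ⊥ T φ)
    (hatoms : ∀ i ∈ T, IsAtom (φ i)) (hinj : Set.InjOn φ T) (hne : T.Nonempty) :
    ∃ e ∈ T, IsConnectedModulo (φ e) (T.erase e) φ := by
  obtain ⟨g, hg⟩ := hne
  rcases Nat.lt_or_ge 1 T.card with hcard | hcard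
  · obtain ⟨e, he, -, hc⟩ := exists_ne_isConnectedModulo_erase hT hatoms hinj hcard g
    exact ⟨e, he, hc⟩
  · refine ⟨g, hg, fun A B hA _ _ hun => ?_⟩
    have hempty : T.erase g = ∅ := by
      rw [← Finset.card_eq_zero, Finset.card_erase_of_mem hg]
      omega
    rw [hempty, Finset.union_eq_empty] at hun
    exact (hA.ne_empty hun.1).elim

end Lattice

lemma Submodule.dualAnnihilator_comap {K V₁ V₂ : Type*} [Field K] [AddCommGroup V₁]
    [Module K V₁] [AddCommGroup V₂] [Module K V₂] (f : V₁ →ₗ[K] V₂) (H : Submodule K V₂) :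
    (H.comap f).dualAnnihilator = H.dualAnnihilator.map f.dualMap := by
  rw [← H.ker_mkQ, ← LinearMap.ker_comp, ← LinearMap.range_dualMap_eq_dualAnnihilator_ker,
    ← LinearMap.range_dualMap_eq_dualAnnihilator_ker, ← LinearMap.dualMap_comp_dualMap,
    LinearMap.range_comp]

lemma IsConnectedModulo.map_bot {ι R M N : Type*} [Ring R] [AddCommGroup M] [Module R M]
    [AddCommGroup N] [Module R N] {T : Finset ι} {φ : ι → Submodule R M} (f : M →ₗ[R] N)
    (h : IsConnectedModulo (LinearMap.ker f) T φ) :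
    IsConnectedModulo ⊥ T fun i => (φ i).map f := by
  have hsup (C : Finset ι) : C.sup (fun i => (φ i).map f) = (C.sup φ).map f :=
    (Finset.apply_sup_eq_sup_comp (Submodule.map f) (fun x y => Submodule.map_sup x y f)
      (Submodule.map_bot f)).symm
  rw [isConnectedModulo_bot_iff]
  intro A B hA hB hAB hun hdisj
  refine h A B hA hB hAB hun (le_of_eq ?_)
  rw [← Submodule.comap_map_eq, ← Submodule.comap_map_eq, ← Submodule.comap_inf, ← hsup,
    ← hsup, disjoint_iff.mp hdisj, Submodule.comap_bot]

section Arrangement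

variable {𝓗 : Finset (Submodule ℂ V)}

lemma arrSpan_eq_finset_sup (𝓗 : Finset (Submodule ℂ V)) :
    arrSpan 𝓗 = 𝓗.sup Submodule.dualAnnihilator :=
  (Finset.sup_eq_iSup _ _).symm

lemma arrIrreducible_iff_isConnectedModulo :
    ArrIrreducible 𝓗 ↔ IsConnectedModulo ⊥ 𝓗 Submodule.dualAnnihilator := by
  simp only [ArrIrreducible, ArrReducible, isConnectedModulo_bot_iff, arrSpan_eq_finset_sup,
    not_exists, not_and]
  exact Iff.rfl

lemma IsHyperplane.isAtom_dualAnnihilator [FiniteDimensional ℂ V] {H : Submodule ℂ V}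
    (hH : IsHyperplane H) : IsAtom H.dualAnnihilator := by
  obtain ⟨f, hf, rfl⟩ := hH
  have hcoatom : IsCoatom (LinearMap.ker f) :=
    LinearMap.isCoatom_ker_of_surjective (LinearMap.surjective_of_ne_zero hf)
  exact isCoatom_dual_iff_isAtom.mp
    (Subspace.orderIsoFiniteDimensional.isCoatom_iff _ |>.mpr hcoatom)

lemma ArrEssential.nonempty [Nontrivial V] (hess : ArrEssential 𝓗) : 𝓗.Nonempty := by
  rw [Finset.nonempty_iff_ne_empty]
  rintro rfl
  simp [ArrEssential, arrCentre] at hess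

lemma ArrEssential.inducedArr (hess : ArrEssential 𝓗) (H₀ : Submodule ℂ V) :
    ArrEssential (inducedArr 𝓗 H₀) := by
  rw [ArrEssential, eq_bot_iff]
  intro x hx
  have hxV : (x : V) ∈ arrCentre 𝓗 := by
    simp only [arrCentre, Submodule.mem_iInf] at hx ⊢
    intro H hH
    by_cases hH₀ : H = H₀
    · exact hH₀ ▸ x.2
    · exact hx _ (Finset.mem_image_of_mem _ (Finset.mem_erase.mpr ⟨hH₀, hH⟩))
  rw [hess, Submodule.mem_bot] at hxV
  exact (Submodule.mem_bot ℂ).mpr (Subtype.ext hxV)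

end Arrangement

/-- An essential irreducible arrangement in `V` with `dim V ≥ 2`
has a hyperplane `H₀` whose induced arrangement on `H₀` is essential and
irreducible. -/
theorem exists_hyperplane_induced_essential_irreducible
    [FiniteDimensional ℂ V]
    (𝓗 : Finset (Submodule ℂ V)) (harr : IsArrangement 𝓗)
    (hess : ArrEssential 𝓗) (hirr : ArrIrreducible 𝓗)
    (hdim : 2 ≤ Module.finrank ℂ V) :
    ∃ H₀ ∈ 𝓗, ArrEssential (inducedArr 𝓗 H₀) ∧ ArrIrreducible (inducedArr 𝓗 H₀) := by
  have : Nontrivial V := Module.nontrivial_of_finrank_pos (R := ℂ) (by omega)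
  obtain ⟨H₀, hH₀, hconn⟩ := exists_isConnectedModulo_erase
    (arrIrreducible_iff_isConnectedModulo.mp hirr)
    (fun H hH => (harr H hH).isAtom_dualAnnihilator)
    (fun _ _ _ _ h => Subspace.dualAnnihilator_inj.mp h) hess.nonempty
  refine ⟨H₀, hH₀, hess.inducedArr H₀, arrIrreducible_iff_isConnectedModulo.mpr ?_⟩
  have hrestrict : Submodule.dualAnnihilator ∘ Submodule.comap H₀.subtype =
      fun H => H.dualAnnihilator.map H₀.dualRestrict :=
    funext fun H => Submodule.dualAnnihilator_comap H₀.subtype H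
  -- restricting to `H₀` is contraction at `H₀⁰ = ker (restriction to H₀)` in the dual
  refine IsConnectedModulo.image (hrestrict ▸ IsConnectedModulo.map_bot _ ?_)
  rwa [Submodule.dualRestrict_ker_eq_dualAnnihilator]
end
end

section
/- For every n ≥ 1 and every a = (a₁,…,a_{n+1}) ∈ ℂ^{n+1}, the Jordan–Pochhammer endomorphisms Ã_{i,j} of ℂ^{n+1} satisfy: (a) Ã_{i,j} vanishes on the hyperplane {v ∈ ℂ^{n+1} : v_i = v_j}; (b) for every triple i < j < k, the sum Ã_{i,j} + Ã_{i,k} + Ã_{j,k} commutes with each of Ã_{i,j}, Ã_{i,k}, Ã_{j,k} (equivalently, [Ã_{i,j}, Ã_{i,k} + Ã_{j,k}] = 0 and cyclically); (c) [Ã_{i,j}, Ã_{k,l}] = 0 whenever {i,j} ∩ {k,l} = ∅. In other words, the residues of the Lauricella connection satisfy the infinitesimal braid relations, i.e. the Basic Assumptions for the braid arrangement. -/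
/-!
`Ã_{i,j} = (e_i^* - e_j^*) ⊗ n_{i,j}` reads only the coordinates `i, j` and takes values in
`span(e_i, e_j)`, which gives (a) and (c). For (b), the sum of the three residues of a triple `S`
is `Ω_S v = s_S • v|_S - ⟨a, v⟩_S • 𝟙_S` with `s_S = ∑_{u ∈ S} a_u`. Since `⟨a, n_{p,q}⟩ = 0`, every
`n_{p,q}` with `p, q ∈ S` is an eigenvector of `Ω_S` for `s_S`, and `Ã_{p,q}` kills `𝟙_S`; hence
`Ω_S Ã_{p,q} = s_S Ã_{p,q} = Ã_{p,q} Ω_S`.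
-/

open scoped Classical

noncomputable section

/-- The Jordan–Pochhammer endomorphism `Ã_{i,j}` of `ℂⁿ` with parameters `a`:
`Ã_{i,j}(v) = (v_i − v_j) · (a_j ẽ_i − a_i ẽ_j)`. -/
def JPend {n : ℕ} (a : Fin n → ℂ) (i j : Fin n) : Module.End ℂ (Fin n → ℂ) :=
  LinearMap.smulRight
    ((LinearMap.proj i : (Fin n → ℂ) →ₗ[ℂ] ℂ) - LinearMap.proj j)
    (a j • (Pi.single i 1 : Fin n → ℂ) - a i • (Pi.single j 1 : Fin n → ℂ))

namespace JPend

variable {n : ℕ} (a : Fin n → ℂ)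

def vec (i j : Fin n) : Fin n → ℂ :=
  a j • Pi.single i 1 - a i • Pi.single j 1

lemma vec_apply (i j t : Fin n) :
    vec a i j t = a j * (if t = i then 1 else 0) - a i * (if t = j then 1 else 0) := by
  simp [vec, Pi.single_apply]

lemma vec_apply_of_ne {i j t : Fin n} (hi : t ≠ i) (hj : t ≠ j) : vec a i j t = 0 := by
  simp [vec_apply, hi, hj]

lemma apply (i j : Fin n) (v : Fin n → ℂ) : JPend a i j v = (v i - v j) • vec a i j := rfl

lemma apply_eq_zero_of_eq {i j : Fin n} {v : Fin n → ℂ} (h : v i = v j) : JPend a i j v = 0 := by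
  simp [apply, h]

lemma mul_eq_zero_of_disjoint {i j k l : Fin n} (hik : i ≠ k) (hil : i ≠ l) (hjk : j ≠ k)
    (hjl : j ≠ l) : JPend a i j * JPend a k l = 0 := by
  refine LinearMap.ext fun v => ?_
  refine apply_eq_zero_of_eq a ?_
  simp [apply, vec_apply_of_ne, hik, hil, hjk, hjl]

lemma commute_of_disjoint {i j k l : Fin n} (hik : i ≠ k) (hil : i ≠ l) (hjk : j ≠ k)
    (hjl : j ≠ l) : Commute (JPend a i j) (JPend a k l) :=
  (mul_eq_zero_of_disjoint a hik hil hjk hjl).trans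
    (mul_eq_zero_of_disjoint a hik.symm hjk.symm hil.symm hjl.symm).symm

/-- The sum `Ω_S` of the residues `Ã_{p,q}`, `p < q` in `S`, in closed form. -/
def flatSum (S : Finset (Fin n)) : Module.End ℂ (Fin n → ℂ) :=
  (∑ u ∈ S, a u) • LinearMap.pi (fun t => if t ∈ S then LinearMap.proj t else 0) -
    LinearMap.smulRight (∑ u ∈ S, a u • (LinearMap.proj u : (Fin n → ℂ) →ₗ[ℂ] ℂ))
      (fun t => if t ∈ S then 1 else 0)

lemma flatSum_apply (S : Finset (Fin n)) (v : Fin n → ℂ) (t : Fin n) :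
    flatSum a S v t =
      if t ∈ S then (∑ u ∈ S, a u) * v t - ∑ u ∈ S, a u * v u else 0 := by
  by_cases ht : t ∈ S <;> simp [flatSum, ht]

lemma flatSum_vec {S : Finset (Fin n)} {p q : Fin n} (hp : p ∈ S) (hq : q ∈ S) :
    flatSum a S (vec a p q) = (∑ u ∈ S, a u) • vec a p q := by
  have pairing : ∑ u ∈ S, a u * vec a p q u = 0 := by
    simp only [vec_apply, mul_sub, mul_ite, mul_one, mul_zero, Finset.sum_sub_distrib,
      Finset.sum_ite_eq', hp, hq, if_true]
    ring
  ext t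
  by_cases ht : t ∈ S
  · simp [flatSum_apply, ht, pairing]
  · simp [flatSum_apply, ht, vec_apply_of_ne a (ne_of_mem_of_not_mem hp ht).symm
      (ne_of_mem_of_not_mem hq ht).symm]

lemma flatSum_mul {S : Finset (Fin n)} {p q : Fin n} (hp : p ∈ S) (hq : q ∈ S) :
    flatSum a S * JPend a p q = (∑ u ∈ S, a u) • JPend a p q := by
  refine LinearMap.ext fun v => ?_
  simp only [Module.End.mul_apply, LinearMap.smul_apply, apply, map_smul, flatSum_vec a hp hq,
    smul_comm (v p - v q)]

lemma mul_flatSum {S : Finset (Fin n)} {p q : Fin n} (hp : p ∈ S) (hq : q ∈ S) :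
    JPend a p q * flatSum a S = (∑ u ∈ S, a u) • JPend a p q := by
  refine LinearMap.ext fun v => ?_
  simp only [Module.End.mul_apply, LinearMap.smul_apply, apply, flatSum_apply, hp, hq,
    if_true, smul_smul]
  congr 1
  ring

lemma commute_flatSum {S : Finset (Fin n)} {p q : Fin n} (hp : p ∈ S) (hq : q ∈ S) :
    Commute (flatSum a S) (JPend a p q) :=
  (flatSum_mul a hp hq).trans (mul_flatSum a hp hq).symm

lemma add_add_eq_flatSum {i j k : Fin n} (hij : i ≠ j) (hik : i ≠ k) (hjk : j ≠ k) :
    JPend a i j + JPend a i k + JPend a j k = flatSum a {i, j, k} := by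
  refine LinearMap.ext fun v => funext fun t => ?_
  simp only [LinearMap.add_apply, Pi.add_apply, apply, Pi.smul_apply, smul_eq_mul, vec_apply,
    flatSum_apply, Finset.mem_insert, Finset.mem_singleton, Finset.sum_insert,
    Finset.sum_singleton, hij, hik, hjk, or_self, not_false_eq_true]
  split_ifs <;> simp_all <;> ring

end JPend

theorem jordanPochhammer_infinitesimal_braid_relations_general
    (n : ℕ) (a : Fin (n + 1) → ℂ) :
    (∀ i j : Fin (n + 1), i < j →
        ∀ v : Fin (n + 1) → ℂ, v i = v j → JPend a i j v = 0) ∧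
      (∀ i j k : Fin (n + 1), i < j → j < k →
        Commute (JPend a i j + JPend a i k + JPend a j k) (JPend a i j) ∧
        Commute (JPend a i j + JPend a i k + JPend a j k) (JPend a i k) ∧
        Commute (JPend a i j + JPend a i k + JPend a j k) (JPend a j k)) ∧
      ∀ i j k l : Fin (n + 1), i < j → k < l →
        i ≠ k → i ≠ l → j ≠ k → j ≠ l → Commute (JPend a i j) (JPend a k l) := by
  refine ⟨fun i j _ v h => JPend.apply_eq_zero_of_eq a h, fun i j k hij hjk => ?_,
    fun i j k l _ _ hik hil hjk hjl => JPend.commute_of_disjoint a hik hil hjk hjl⟩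
  rw [JPend.add_add_eq_flatSum a hij.ne (hij.trans hjk).ne hjk.ne]
  refine ⟨JPend.commute_flatSum a ?_ ?_, JPend.commute_flatSum a ?_ ?_,
    JPend.commute_flatSum a ?_ ?_⟩ <;> simp

/-- The Jordan–Pochhammer endomorphisms satisfy: (a) `Ã_{i,j}`
vanishes on the hyperplane `{v_i = v_j}`; (b) for `i < j < k` the sum
`Ã_{i,j} + Ã_{i,k} + Ã_{j,k}` commutes with each of its three summands; (c)
`[Ã_{i,j}, Ã_{k,l}] = 0` when `{i,j} ∩ {k,l} = ∅`. These are the infinitesimal braid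
relations, i.e. the Basic Assumptions for the braid arrangement. -/
theorem jordanPochhammer_infinitesimal_braid_relations
    (n : ℕ) (hn : 1 ≤ n) (a : Fin (n + 1) → ℂ) :
    (∀ i j : Fin (n + 1), i < j →
        ∀ v : Fin (n + 1) → ℂ, v i = v j → JPend a i j v = 0) ∧
      (∀ i j k : Fin (n + 1), i < j → j < k →
        Commute (JPend a i j + JPend a i k + JPend a j k) (JPend a i j) ∧
        Commute (JPend a i j + JPend a i k + JPend a j k) (JPend a i k) ∧
        Commute (JPend a i j + JPend a i k + JPend a j k) (JPend a j k)) ∧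
      ∀ i j k l : Fin (n + 1), i < j → k < l →
        i ≠ k → i ≠ l → j ≠ k → j ≠ l → Commute (JPend a i j) (JPend a k l) :=
  jordanPochhammer_infinitesimal_braid_relations_general n a
end
end

section
/- Let α₁,…,α_{n+1} be real numbers satisfying conditions (N.I.), (P) and (S). Then for every subset I ⊆ {1,…,n+1} with |I| ≥ 2, one has Σ_{i∈I} α_i > |I| − 1. -/
/-!
Split each `α i` as `⌊α i⌋ + fract (α i)`. If the fractional parts sum to less than `1`, then
`fract (α i) + fract (α j) < 1`, so (P) forces `⌊α i⌋ + ⌊α j⌋ ≥ 1` for `i ≠ j`; if they sum to more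
than `n`, the deficits `1 - fract (α i)` sum to less than `1`, so the fractional parts over `I` already
exceed `|I| - 1`, while (P) still forces `⌊α i⌋ + ⌊α j⌋ ≥ 0`. Integers whose pairwise sums are at
least `c ≤ 1` have total at least `(|I| - 1) c`: only the smallest one can be below `c / 2`, and the
others make up for it. In the first case (N.I.) makes the fractional parts strictly positive.
-/

open Finset

lemma Finset.card_sub_one_mul_le_sum_of_pairwise {ι : Type*} {s : Finset ι} {g : ι → ℤ} {c : ℤ}
    (hc : c ≤ 1) (hg : (s : Set ι).Pairwise fun i j => c ≤ g i + g j) (hs : 2 ≤ #s) :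
    (#s - 1 : ℤ) * c ≤ ∑ i ∈ s, g i := by
  classical
  obtain ⟨m, hm, hmin⟩ := s.exists_min_image g (card_pos.mp (by omega))
  have hrest : (#s - 1 : ℤ) * max (c - g m) (g m) ≤ ∑ i ∈ s.erase m, g i := by
    have := card_nsmul_le_sum (s.erase m) g (max (c - g m) (g m)) fun j hj =>
      max_le (by linarith [hg hm (mem_of_mem_erase hj) (ne_of_mem_erase hj).symm])
        (hmin j (mem_of_mem_erase hj))
    rwa [card_erase_of_mem hm, nsmul_eq_mul, Nat.cast_sub (by omega), Nat.cast_one] at this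
  have hk : (2 : ℤ) ≤ #s := by exact_mod_cast hs
  rw [← add_sum_erase s g hm]
  rcases le_or_gt (g m) 0 with h | h
  · nlinarith [le_max_left (c - g m) (g m)]
  · nlinarith [le_max_right (c - g m) (g m)]

lemma Finset.sum_eq_sum_floor_add_sum_fract {ι : Type*} (s : Finset ι) (x : ι → ℝ) :
    ∑ i ∈ s, x i = ((∑ i ∈ s, ⌊x i⌋ : ℤ) : ℝ) + ∑ i ∈ s, Int.fract (x i) := by
  push_cast
  rw [← sum_add_distrib]
  simp only [Int.floor_add_fract]

lemma Finset.add_le_sum_univ_of_nonneg {ι : Type*} [Fintype ι] {f : ι → ℝ} (hf : ∀ i, 0 ≤ f i)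
    {i j : ι} (hij : i ≠ j) : f i + f j ≤ ∑ k, f k := by
  classical
  rw [← sum_pair hij]
  exact sum_le_sum_of_subset_of_nonneg (subset_univ _) fun k _ _ => hf k

section

variable {ι : Type*} [Fintype ι] {α : ι → ℝ}

lemma card_sub_one_lt_sum_of_sum_fract_lt_one (hP : Pairwise fun i j => 1 < α i + α j)
    (hNI : ∀ i, ∀ m : ℤ, α i ≠ m) (hS : ∑ i, Int.fract (α i) < 1) {s : Finset ι} (hs : 2 ≤ #s) :
    (#s : ℝ) - 1 < ∑ i ∈ s, α i := by
  have hfloor : (s : Set ι).Pairwise fun i j => 1 ≤ ⌊α i⌋ + ⌊α j⌋ := by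
    intro i _ j _ hij
    have hfract := add_le_sum_univ_of_nonneg (fun k => Int.fract_nonneg (α k)) hij
    suffices (0 : ℝ) < ⌊α i⌋ + ⌊α j⌋ by exact_mod_cast this
    linarith [hP hij, Int.floor_add_fract (α i), Int.floor_add_fract (α j)]
  have hint : (#s - 1 : ℝ) ≤ ((∑ i ∈ s, ⌊α i⌋ : ℤ) : ℝ) := by
    exact_mod_cast mul_one (#s - 1 : ℤ) ▸ card_sub_one_mul_le_sum_of_pairwise le_rfl hfloor hs
  have hpos : 0 < ∑ i ∈ s, Int.fract (α i) :=
    sum_pos (fun i _ => Int.fract_pos.mpr (hNI i _)) (card_pos.mp (by omega))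
  rw [sum_eq_sum_floor_add_sum_fract]
  linarith

lemma card_sub_one_lt_sum_of_card_sub_one_lt_sum_fract (hP : Pairwise fun i j => 1 < α i + α j)
    (hS : (Fintype.card ι : ℝ) - 1 < ∑ i, Int.fract (α i)) {s : Finset ι} (hs : 2 ≤ #s) :
    (#s : ℝ) - 1 < ∑ i ∈ s, α i := by
  have hfloor : (s : Set ι).Pairwise fun i j => 0 ≤ ⌊α i⌋ + ⌊α j⌋ := by
    intro i _ j _ hij
    have := Int.le_floor_add_floor (α i) (α j)
    have : 1 ≤ ⌊α i + α j⌋ := Int.le_floor.mpr (by exact_mod_cast (hP hij).le)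
    omega
  have hint : (0 : ℝ) ≤ ((∑ i ∈ s, ⌊α i⌋ : ℤ) : ℝ) := by
    exact_mod_cast mul_zero (#s - 1 : ℤ) ▸ card_sub_one_mul_le_sum_of_pairwise zero_le_one hfloor hs
  have hdeficit : ∑ i ∈ s, (1 - Int.fract (α i)) ≤ ∑ i, (1 - Int.fract (α i)) :=
    sum_le_sum_of_subset_of_nonneg (subset_univ s) fun i _ _ => by
      linarith [Int.fract_lt_one (α i)]
  simp only [sum_sub_distrib, sum_const, card_univ, nsmul_eq_mul, mul_one] at hdeficit
  rw [sum_eq_sum_floor_add_sum_fract]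
  linarith

end

/-- If `α₁, …, α_{n+1}` satisfy the non-integrality condition
(N.I.), the positivity condition (P), and the signature condition (S), then
`Σ_{i ∈ I} α_i > |I| − 1` for every subset `I` with `|I| ≥ 2`. -/
theorem sum_gt_card_sub_one_of_NI_P_S
    (n : ℕ) (α : Fin (n + 1) → ℝ)
    (hNI : ∀ i : Fin (n + 1), ∀ m : ℤ, α i ≠ m)
    (hP : ∀ i j : Fin (n + 1), i < j → 1 < α i + α j)
    (hS : (∑ i, Int.fract (α i)) < 1 ∨ (n : ℝ) < ∑ i, Int.fract (α i)) :
    ∀ I : Finset (Fin (n + 1)), 2 ≤ I.card →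
      (I.card : ℝ) - 1 < ∑ i ∈ I, α i := by
  intro I hI
  have hP' : Pairwise fun i j => 1 < α i + α j := fun i j hij => by
    rcases hij.lt_or_gt with h | h
    exacts [hP i j h, add_comm (α j) (α i) ▸ hP j i h]
  rcases hS with hS | hS
  · exact card_sub_one_lt_sum_of_sum_fract_lt_one hP' hNI hS hI
  · exact card_sub_one_lt_sum_of_card_sub_one_lt_sum_fract hP' (by simpa using hS) hI
end
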